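/- The number of noncrossing partitions of {1,...,2l} with all blocks of even size equals the Fuss–Catalan number (1/(2l+1))·binom(3l, l). -/

import Mathlib

open Finset Polynomial

/-- A set partition of `{1,…,k}` is encoded as a `Setoid (Fin k)`; the join `⊔` in the
lattice of setoids is exactly the join in the partition lattice. -/
noncomputable instance setoidFintype {k : ℕ} : Fintype (Setoid (Fin k)) := by
  have : Finite (Setoid (Fin k)) :=
    Finite.of_injective (fun s => s.r)
      (fun s t h => Setoid.ext (fun a b => by rw [show s.r = t.r from h]))
  exact Fintype.ofFinite _

noncomputable instance setoidDecEq {k : ℕ} : DecidableEq (Setoid (Fin k)) := Classical.decEq _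

noncomputable instance setoidSubtypeFintype {k : ℕ} {p : Setoid (Fin k) → Prop} :
    Fintype {π : Setoid (Fin k) // p π} := Fintype.ofFinite _

/-- The number of blocks of a set partition. -/
noncomputable def nblocks {k : ℕ} (π : Setoid (Fin k)) : ℕ := Nat.card (Quotient π)
/-- `π` is a pair partition (perfect matching): every point has a unique partner. -/
def IsPairing {m : ℕ} (π : Setoid (Fin m)) : Prop :=
  ∀ i, ∃ j, j ≠ i ∧ π.r i j ∧ ∀ l, π.r i l → l = i ∨ l = j

/-- `π` is noncrossing: there are no `a < b < c < d` with `a ∼ c`, `b ∼ d`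
lying in different blocks. -/
def IsNoncrossing {m : ℕ} (π : Setoid (Fin m)) : Prop :=
  ¬ ∃ a b c d : Fin m, a < b ∧ b < c ∧ c < d ∧ π.r a c ∧ π.r b d ∧ ¬ π.r a b

/-!
Record a partition `π` of `{0, …, n-1}` by the word `u` with `u i = |B| / 2` when `i` is the
smallest element of its block `B` and `u i = 0` otherwise. Its height
`H k = 2 (u 0 + ⋯ + u (k-1)) - k` counts the points `≥ k` whose block starts before `k`, so
`H ≥ 0` and `H n = 0`: `u` is a Łukasiewicz word. Conversely such a word gives back a
noncrossing partition with even blocks: a position `i` with `u i = 0` joins the block of the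
last earlier position where the height was below `H i`, and the fibres of this map have size
`2 u j` because the heights just after the points of a fibre are distinct and lie in an
interval of that length.

By Raney's cycle lemma exactly one of the `2l + 1` rotations of a word `v` of length `2l + 1`
with `2 ∑ v = 2l` has nonnegative proper prefix heights, and that rotation is a Łukasiewicz
word of length `2l` followed by a `0`. Hence `(2l + 1)` times our count is the number of such
`v`, which is `binom(3l, l)` by stars and bars.
-/

section PrefixSum

variable {n : ℕ}

def prefixSum (x : Fin n → ℤ) (k : ℕ) : ℤ := ∑ i with i.val < k, x i

lemma prefixSum_zero (x : Fin n → ℤ) : prefixSum x 0 = 0 := by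
  simp [prefixSum]

lemma prefixSum_succ (x : Fin n → ℤ) (i : Fin n) :
    prefixSum x (i + 1) = prefixSum x i + x i := by
  have hfilter : univ.filter (fun j : Fin n => j.val < i + 1) =
      insert i (univ.filter (·.val < i.val)) := by
    ext j
    simp only [mem_filter, mem_univ, true_and, mem_insert, Fin.ext_iff]
    omega
  rw [prefixSum, hfilter, sum_insert (by simp), add_comm, prefixSum]

lemma prefixSum_of_le (x : Fin n → ℤ) {k : ℕ} (hk : n ≤ k) :
    prefixSum x k = ∑ i, x i := by
  rw [prefixSum, filter_true_of_mem fun i _ => i.isLt.trans_le hk]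

lemma prefixSum_comp_castSucc (x : Fin (n + 1) → ℤ) {k : ℕ} (hk : k ≤ n) :
    prefixSum (x ∘ Fin.castSucc) k = prefixSum x k := by
  simp only [prefixSum, sum_filter, Fin.sum_univ_castSucc, Fin.val_castSucc, Fin.val_last,
    if_neg (not_lt.2 hk), add_zero, Function.comp_apply]

end PrefixSum

section Raney

variable {m : ℕ} (x : Fin (m + 1) → ℤ)

open Fin.NatCast in
def periodicSum (k : ℕ) : ℤ := ∑ t ∈ range k, x t

open Fin.NatCast in
lemma prefixSum_eq_periodicSum {k : ℕ} (hk : k ≤ m + 1) : prefixSum x k = periodicSum x k := by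
  induction k with
  | zero => simp [prefixSum_zero, periodicSum]
  | succ k ih =>
    rw [periodicSum, sum_range_succ, ← periodicSum, ← ih (by omega),
      Fin.natCast_eq_mk (by omega : k < m + 1)]
    exact prefixSum_succ x ⟨k, by omega⟩

open Fin.NatCast in
lemma periodicSum_add_period (k : ℕ) :
    periodicSum x (k + (m + 1)) = periodicSum x k + ∑ i, x i := by
  rw [periodicSum, periodicSum, sum_range_add,
    ← Fin.sum_univ_eq_sum_range (fun t => x ↑(k + t))]
  simp only [Nat.cast_add, Fin.cast_val_eq_self]
  congr 1
  exact Fintype.sum_equiv (Equiv.addLeft (k : Fin (m + 1))) _ _ fun _ => rfl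

open Fin.NatCast in
lemma prefixSum_rotate (r : Fin (m + 1)) {k : ℕ} (hk : k ≤ m + 1) :
    prefixSum (fun j => x (j + r)) k = periodicSum x (r + k) - periodicSum x r := by
  rw [prefixSum_eq_periodicSum _ hk, periodicSum, periodicSum, periodicSum,
    sum_range_add_sub_sum_range]
  simp only [Nat.cast_add, Fin.cast_val_eq_self, add_comm]

lemma rotate_prefixSum_nonneg_iff (hx : ∑ i, x i = -1) (r : Fin (m + 1)) :
    (∀ k ≤ m, 0 ≤ prefixSum (fun j => x (j + r)) k) ↔
      (∀ s ≤ m, periodicSum x r ≤ periodicSum x s) ∧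
        ∀ s < r.val, periodicSum x r < periodicSum x s := by
  have hper (k : ℕ) : periodicSum x (k + (m + 1)) = periodicSum x k - 1 := by
    rw [periodicSum_add_period, hx, sub_eq_add_neg]
  constructor
  · intro h
    have hfirst (s : ℕ) (hs : s < r) : periodicSum x r < periodicSum x s := by
      have := h (s + (m + 1) - r) (by omega)
      rw [prefixSum_rotate x r (by omega),
        show (r : ℕ) + (s + (m + 1) - r) = s + (m + 1) by omega, hper] at this
      linarith
    refine ⟨fun s hs => ?_, hfirst⟩
    rcases lt_or_ge s r with hsr | hrs
    · exact (hfirst s hsr).le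
    · have := h (s - r) (by omega)
      rw [prefixSum_rotate x r (by omega), Nat.add_sub_cancel' hrs] at this
      linarith
  · rintro ⟨hmin, hfirst⟩ k hk
    rw [prefixSum_rotate x r (by omega), sub_nonneg]
    rcases lt_or_ge (r + k) (m + 1) with h | h
    · exact hmin _ (by omega)
    · have := hfirst (r + k - (m + 1)) (by omega)
      rw [show (r : ℕ) + k = r + k - (m + 1) + (m + 1) by omega, hper]
      linarith

/-- Raney's cycle lemma. -/
theorem existsUnique_rotate_prefixSum_nonneg (hx : ∑ i, x i = -1) :
    ∃! r : Fin (m + 1), ∀ k ≤ m, 0 ≤ prefixSum (fun j => x (j + r)) k := by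
  simp only [rotate_prefixSum_nonneg_iff x hx]
  have hmin : ∃ r, r ≤ m ∧ ∀ s ≤ m, periodicSum x r ≤ periodicSum x s := by
    obtain ⟨r, hr, hmin⟩ := (range (m + 1)).exists_min_image (periodicSum x) ⟨0, by simp⟩
    exact ⟨r, Nat.lt_succ_iff.1 (mem_range.1 hr),
      fun s hs => hmin s (mem_range.2 (Nat.lt_succ_of_le hs))⟩
  -- the good rotation starts at the first minimum of the periodic partial sums
  obtain ⟨hr, hmin_r⟩ := Nat.find_spec hmin
  refine ⟨⟨Nat.find hmin, by omega⟩, ⟨hmin_r, fun s hs => (hmin_r s (by omega)).lt_of_ne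
    fun h => Nat.find_min hmin hs ⟨by omega, fun t ht => h ▸ hmin_r t ht⟩⟩, ?_⟩
  rintro r ⟨hmin', hfirst'⟩
  refine Fin.ext (le_antisymm (not_lt.1 fun h => ?_) (Nat.find_min' hmin ⟨by omega, hmin'⟩))
  exact (hfirst' _ h).not_ge (hmin_r _ (by omega))

end Raney

section Lukasiewicz

variable {n : ℕ}

def height (u : Fin n → ℕ) (k : ℕ) : ℤ := prefixSum (fun i => 2 * (u i : ℤ) - 1) k

def IsLukasiewicz (u : Fin n → ℕ) : Prop := 2 * ∑ i, u i = n ∧ ∀ k ≤ n, 0 ≤ height u k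

lemma height_zero (u : Fin n → ℕ) : height u 0 = 0 := prefixSum_zero _

lemma height_succ (u : Fin n → ℕ) (i : Fin n) :
    height u (i + 1) = height u i + 2 * u i - 1 := by
  rw [height, prefixSum_succ, height, add_sub_assoc]

lemma height_of_le (u : Fin n → ℕ) {k : ℕ} (hk : n ≤ k) :
    height u k = 2 * ∑ i, (u i : ℤ) - n := by
  simp [height, prefixSum_of_le _ hk, sum_sub_distrib, mul_sum]

lemma height_eq_sum (u : Fin n → ℕ) {k : ℕ} (hk : k ≤ n) :
    height u k = 2 * ∑ i : Fin n with i.val < k, (u i : ℤ) - k := by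
  simp [height, prefixSum, sum_sub_distrib, mul_sum, Fin.card_filter_val_lt, hk]

lemma IsLukasiewicz.one_le_height {u : Fin n → ℕ} (hu : IsLukasiewicz u) {i : Fin n}
    (h : u i = 0) : 1 ≤ height u i := by
  have := hu.2 (i + 1) i.isLt
  rw [height_succ, h] at this
  push_cast at this
  linarith

/-- The smallest element of the block of `i` in the partition encoded by `u`. -/
def opener (u : Fin n → ℕ) (i : Fin n) : Fin n :=
  if u i = 0 then
    ⟨Nat.findGreatest (fun k => height u k < height u i) i,
      (Nat.findGreatest_le _).trans_lt i.isLt⟩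
  else i

variable {u : Fin n → ℕ} {i : Fin n}

lemma opener_le (u : Fin n → ℕ) (i : Fin n) : opener u i ≤ i := by
  unfold opener
  split_ifs
  exacts [Nat.findGreatest_le _, le_rfl]

lemma opener_of_ne_zero (h : u i ≠ 0) : opener u i = i := if_neg h

lemma val_opener_of_eq_zero (h : u i = 0) :
    (opener u i : ℕ) = Nat.findGreatest (fun k => height u k < height u i) i := by
  rw [opener, if_pos h]

lemma height_opener_lt (hu : IsLukasiewicz u) (h : u i = 0) :
    height u (opener u i) < height u i := by
  rw [val_opener_of_eq_zero h]
  refine Nat.findGreatest_spec (P := fun k => height u k < height u i) (Nat.zero_le _) ?_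
  linarith [height_zero u, hu.one_le_height h]

lemma height_le_of_opener_lt (h : u i = 0) {k : ℕ} (h1 : (opener u i : ℕ) < k) (h2 : k ≤ i) :
    height u i ≤ height u k := by
  rw [val_opener_of_eq_zero h] at h1
  exact not_lt.1 (Nat.findGreatest_is_greatest h1 h2)

lemma opener_lt (hu : IsLukasiewicz u) (h : u i = 0) : opener u i < i :=
  (opener_le u i).lt_of_ne fun he => (height_opener_lt hu h).ne (by rw [he])

lemma opener_eq_self_iff (hu : IsLukasiewicz u) : opener u i = i ↔ u i ≠ 0 :=
  ⟨fun he h => (opener_lt hu h).ne he, opener_of_ne_zero⟩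

lemma opener_opener (hu : IsLukasiewicz u) (i : Fin n) : opener u (opener u i) = opener u i := by
  refine opener_of_ne_zero fun h0 => ?_
  have h : u i = 0 := by
    by_contra h
    exact h (by rwa [opener_of_ne_zero h] at h0)
  have hlt : (opener u i : ℕ) < i := opener_lt hu h
  have h1 := height_le_of_opener_lt h (k := opener u i + 1) (by omega) (by omega)
  rw [height_succ, h0, Nat.cast_zero] at h1
  linarith [height_opener_lt hu h]

lemma opener_le_opener (hu : IsLukasiewicz u) {b c : Fin n} (h1 : opener u c < b) (h2 : b ≤ c) :
    opener u c ≤ opener u b := by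
  have hc : u c = 0 := by
    by_contra hc
    exact (h1.trans_le h2).ne (opener_of_ne_zero hc)
  by_cases hb : u b = 0
  · rw [Fin.le_def, val_opener_of_eq_zero hb]
    exact Nat.le_findGreatest (P := fun k => height u k < height u b) h1.le
      ((height_opener_lt hu hc).trans_le (height_le_of_opener_lt hc h1 h2))
  · rw [opener_of_ne_zero hb]
    exact h1.le

theorem isNoncrossing_ker_opener (hu : IsLukasiewicz u) :
    IsNoncrossing (Setoid.ker (opener u)) := by
  rintro ⟨a, b, c, d, hab, hbc, hcd, hac, hbd, hab'⟩
  change opener u a = opener u c at hac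
  change opener u b = opener u d at hbd
  have hcb : opener u c ≤ opener u b :=
    opener_le_opener hu (hac ▸ (opener_le u a).trans_lt hab) hbc.le
  have hdc : opener u d ≤ opener u c :=
    opener_le_opener hu (hbd ▸ (opener_le u b).trans_lt hbc) hcd.le
  exact hab' (hac.trans (le_antisymm hcb (hbd ▸ hdc)))

lemma height_succ_mem_Icc (hu : IsLukasiewicz u) {j : Fin n} (hij : opener u i = j) :
    height u (i + 1) ∈ Icc (height u j) (height u (j + 1)) := by
  subst hij
  rw [mem_Icc]
  by_cases h : u i = 0
  · have hlt : (opener u i : ℕ) < i := opener_lt hu h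
    have h1 := height_le_of_opener_lt h (k := opener u i + 1) (by omega) (by omega)
    have h2 := height_opener_lt hu h
    rw [height_succ u i, h]
    push_cast
    constructor <;> linarith
  · have : (1 : ℤ) ≤ u i := by exact_mod_cast Nat.one_le_iff_ne_zero.2 h
    rw [opener_of_ne_zero h, height_succ]
    constructor <;> linarith

lemma height_succ_lt_of_opener_eq (hu : IsLukasiewicz u) {i' j : Fin n} (hi : opener u i = j)
    (hi' : opener u i' = j) (hlt : i < i') : height u (i' + 1) < height u (i + 1) := by
  have hji : j ≤ i := hi ▸ opener_le u i
  have h' : u i' = 0 := by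
    rw [← not_ne_iff, ← opener_eq_self_iff hu, hi']
    exact (hji.trans_lt hlt).ne
  have hlt' : (i : ℕ) < i' := hlt
  have := height_le_of_opener_lt h' (k := i + 1) (by rw [hi']; exact Nat.lt_succ_of_le hji)
    (by omega)
  rw [height_succ u i', h']
  push_cast
  linarith

theorem card_filter_opener_eq (hu : IsLukasiewicz u) (j : Fin n) :
    #{i | opener u i = j} = 2 * u j := by
  have hle (j : Fin n) : #{i | opener u i = j} ≤ 2 * u j := by
    have hinj : Set.InjOn (fun i : Fin n => height u (i + 1)) {i | opener u i = j} := by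
      intro i hi i' hi' he
      rcases lt_trichotomy i i' with hlt | heq | hlt
      · exact absurd he (height_succ_lt_of_opener_eq hu hi hi' hlt).ne'
      · exact heq
      · exact absurd he (height_succ_lt_of_opener_eq hu hi' hi hlt).ne
    calc #{i | opener u i = j}
        ≤ #(Icc (height u j) (height u (j + 1))) :=
          card_le_card_of_injOn _ (fun i hi => height_succ_mem_Icc hu (mem_filter.1 hi).2)
            (by simpa using hinj)
      _ = 2 * u j := by
          rw [Int.card_Icc, height_succ]
          omega
  have hsum : ∑ j, #{i | opener u i = j} = ∑ j, 2 * u j := by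
    rw [← mul_sum, hu.1, ← card_eq_sum_card_fiberwise (fun _ _ => mem_univ _), card_univ,
      Fintype.card_fin]
  exact (sum_eq_sum_iff_of_le fun j _ => hle j).1 hsum j (mem_univ j)

end Lukasiewicz

section Partition

variable {n : ℕ}

open Classical in
noncomputable def blockMin (π : Setoid (Fin n)) (i : Fin n) : Fin n :=
  (univ.filter (π.r i)).min' ⟨i, mem_filter.2 ⟨mem_univ _, π.refl' i⟩⟩

noncomputable def toWord (π : Setoid (Fin n)) (i : Fin n) : ℕ := #{j | blockMin π j = i} / 2

noncomputable def openCount (π : Setoid (Fin n)) (k : ℕ) : ℕ :=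
  #{j : Fin n | k ≤ j ∧ (blockMin π j : ℕ) < k}

variable (π : Setoid (Fin n))

lemma rel_blockMin (i : Fin n) : π.r i (blockMin π i) := by
  classical
  exact (mem_filter.1 (min'_mem _ _)).2

lemma blockMin_le_of_rel {i j : Fin n} (h : π.r i j) : blockMin π i ≤ j := by
  classical
  exact min'_le _ _ (mem_filter.2 ⟨mem_univ _, h⟩)

lemma blockMin_le (i : Fin n) : blockMin π i ≤ i := blockMin_le_of_rel π (π.refl' i)

lemma blockMin_eq_blockMin_iff {i j : Fin n} : blockMin π i = blockMin π j ↔ π.r i j := by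
  refine ⟨fun h => π.trans' (rel_blockMin π i) (h ▸ π.symm' (rel_blockMin π j)),
    fun h => ?_⟩
  exact le_antisymm (blockMin_le_of_rel π (π.trans' h (rel_blockMin π j)))
    (blockMin_le_of_rel π (π.trans' (π.symm' h) (rel_blockMin π i)))

lemma blockMin_blockMin (i : Fin n) : blockMin π (blockMin π i) = blockMin π i :=
  (blockMin_eq_blockMin_iff π).2 (π.symm' (rel_blockMin π i))

lemma ker_blockMin : Setoid.ker (blockMin π) = π :=
  Setoid.ext fun _ _ => blockMin_eq_blockMin_iff π

lemma natCard_rel_eq_card (i : Fin n) :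
    Nat.card {j // π.r i j} = #{j | blockMin π j = blockMin π i} := by
  classical
  rw [Nat.card_eq_fintype_card, Fintype.card_subtype]
  congr 1
  ext j
  simp [blockMin_eq_blockMin_iff, π.comm' (x := i)]

variable {π}

lemma two_mul_toWord (heven : ∀ i, Even (Nat.card {j // π.r i j})) (i : Fin n) :
    2 * toWord π i = #{j | blockMin π j = i} := by
  refine Nat.two_mul_div_two_of_even ?_
  by_cases h : ∃ j, blockMin π j = i
  · obtain ⟨j, rfl⟩ := h
    rw [← natCard_rel_eq_card]
    exact heven j
  · rw [not_exists] at h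
    simp [filter_false_of_mem fun j _ => h j]

lemma two_mul_sum_toWord (heven : ∀ i, Even (Nat.card {j // π.r i j})) {k : ℕ} (hk : k ≤ n) :
    2 * ∑ i : Fin n with i.val < k, toWord π i = k + openCount π k := by
  rw [mul_sum]
  simp_rw [two_mul_toWord heven]
  rw [sum_card_fiberwise_eq_card_filter,
    ← card_filter_add_card_filter_not (p := fun j => j.val < k)]
  congr 1
  · rw [filter_filter]
    trans #{j : Fin n | j.val < k}
    · congr 1
      ext j
      simp only [mem_filter, mem_univ, true_and, and_iff_right_iff_imp]
      exact fun h => (Fin.le_def.1 (blockMin_le π j)).trans_lt h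
    · rw [Fin.card_filter_val_lt, min_eq_right hk]
  · rw [filter_filter, openCount]
    congr 1
    ext j
    simp only [mem_filter, mem_univ, true_and]
    omega

lemma height_toWord (heven : ∀ i, Even (Nat.card {j // π.r i j})) {k : ℕ} (hk : k ≤ n) :
    height (toWord π) k = openCount π k := by
  have h : (2 : ℤ) * ∑ i : Fin n with i.val < k, (toWord π i : ℤ) = k + openCount π k := by
    exact_mod_cast two_mul_sum_toWord heven hk
  rw [height_eq_sum _ hk]
  linarith

lemma isLukasiewicz_toWord (heven : ∀ i, Even (Nat.card {j // π.r i j})) :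
    IsLukasiewicz (toWord π) := by
  refine ⟨?_, fun k hk => height_toWord heven hk ▸ Int.natCast_nonneg _⟩
  have hopen : openCount π n = 0 :=
    card_eq_zero.2 (filter_false_of_mem fun j _ hj => (j.isLt.trans_le hj.1).false)
  simpa [filter_true_of_mem fun (i : Fin n) _ => i.isLt, hopen] using
    two_mul_sum_toWord heven le_rfl

lemma IsNoncrossing.lt_blockMin (hnc : IsNoncrossing π) {c d : Fin n}
    (hmin : blockMin π c < blockMin π d) (hcd : c < d) : c < blockMin π d := by
  have hne : blockMin π c ≠ blockMin π d := hmin.ne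
  rcases lt_or_ge c (blockMin π d) with h | h
  · exact h
  rcases h.lt_or_eq with h | h
  · have hrel : π.r (blockMin π c) (blockMin π d) := by
      by_contra hrel
      exact hnc ⟨_, _, c, d, hmin, h, hcd, π.symm' (rel_blockMin π c),
        π.symm' (rel_blockMin π d), hrel⟩
    rw [← blockMin_eq_blockMin_iff, blockMin_blockMin, blockMin_blockMin] at hrel
    exact absurd hrel hne
  · exact absurd ((blockMin_eq_blockMin_iff π).2 (h ▸ π.symm' (rel_blockMin π d))) hne

lemma openCount_blockMin_lt (hnc : IsNoncrossing π) {i : Fin n} (h : blockMin π i < i) :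
    openCount π (blockMin π i) < openCount π i := by
  refine card_lt_card ((ssubset_iff_of_subset fun j hj => ?_).2 ⟨i, ?_, ?_⟩)
  · simp only [mem_filter, mem_univ, true_and] at hj ⊢
    refine ⟨not_lt.1 fun hji => ?_, hj.2.trans h⟩
    have := hnc.lt_blockMin (c := j) (d := i) hj.2 hji
    exact absurd hj.1 (not_le.2 this)
  · simpa using h
  · simp

lemma openCount_le_of_blockMin_lt (hnc : IsNoncrossing π) {i : Fin n} {k : ℕ}
    (h1 : (blockMin π i : ℕ) < k) (h2 : k ≤ i) : openCount π i ≤ openCount π k := by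
  refine card_le_card fun j hj => ?_
  simp only [mem_filter, mem_univ, true_and] at hj ⊢
  refine ⟨h2.trans hj.1, not_le.1 fun hkj => ?_⟩
  have hij : i < j := lt_of_le_of_ne hj.1 fun h => by subst h; omega
  have := hnc.lt_blockMin (c := i) (d := j) (by rw [Fin.lt_def]; omega) hij
  rw [Fin.lt_def] at this
  omega

theorem opener_toWord (hnc : IsNoncrossing π) (heven : ∀ i, Even (Nat.card {j // π.r i j}))
    (i : Fin n) : opener (toWord π) i = blockMin π i := by
  rcases (blockMin_le π i).lt_or_eq with hlt | heq
  · have h0 : toWord π i = 0 := by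
      rw [toWord, filter_false_of_mem fun j _ hj => hlt.ne (by rw [← hj, blockMin_blockMin]),
        card_empty]
    refine Fin.ext ((val_opener_of_eq_zero h0).trans (Nat.findGreatest_eq_iff.2
      ⟨blockMin_le π i, fun _ => ?_, fun k hk1 hk2 => ?_⟩))
    · rw [height_toWord heven (blockMin π i).isLt.le, height_toWord heven i.isLt.le]
      exact_mod_cast openCount_blockMin_lt hnc hlt
    · rw [not_lt, height_toWord heven i.isLt.le, height_toWord heven (hk2.trans i.isLt.le)]
      exact_mod_cast openCount_le_of_blockMin_lt hnc hk1 hk2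
  · rw [heq, opener_of_ne_zero]
    intro h0
    have := two_mul_toWord heven i
    rw [h0, mul_zero, eq_comm, card_eq_zero, filter_eq_empty_iff] at this
    exact this (mem_univ i) heq

end Partition

section Bijection

variable {n : ℕ} {u : Fin n → ℕ}

lemma blockMin_ker_opener (hu : IsLukasiewicz u) (i : Fin n) :
    blockMin (Setoid.ker (opener u)) i = opener u i := by
  refine le_antisymm (blockMin_le_of_rel _ (opener_opener hu i).symm) ?_
  rw [show opener u i = opener u (blockMin _ i) from rel_blockMin (Setoid.ker (opener u)) i]
  exact opener_le u _

lemma toWord_ker_opener (hu : IsLukasiewicz u) : toWord (Setoid.ker (opener u)) = u := by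
  funext i
  simp only [toWord, blockMin_ker_opener hu, card_filter_opener_eq hu]
  omega

lemma even_natCard_ker_opener (hu : IsLukasiewicz u) (i : Fin n) :
    Even (Nat.card {j // (Setoid.ker (opener u)).r i j}) := by
  simp only [natCard_rel_eq_card, blockMin_ker_opener hu, card_filter_opener_eq hu, even_two_mul]

noncomputable def ncEvenPartitionEquiv (n : ℕ) :
    {π : Setoid (Fin n) // IsNoncrossing π ∧ ∀ i, Even (Nat.card {j // π.r i j})} ≃
      {u : Fin n → ℕ // IsLukasiewicz u} where
  toFun π := ⟨toWord π.1, isLukasiewicz_toWord π.2.2⟩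
  invFun u :=
    ⟨Setoid.ker (opener u.1), isNoncrossing_ker_opener u.2, even_natCard_ker_opener u.2⟩
  left_inv π := Subtype.ext <| by
    change Setoid.ker (opener (toWord π.1)) = π.1
    rw [show opener (toWord π.1) = blockMin π.1 from funext (opener_toWord π.2.1 π.2.2),
      ker_blockMin]
  right_inv u := Subtype.ext (toWord_ker_opener u.2)

end Bijection

section Counting

variable {m : ℕ}

lemma height_init (w : Fin (m + 1) → ℕ) {k : ℕ} (hk : k ≤ m) :
    height (Fin.init w) k = height w k :=
  prefixSum_comp_castSucc (fun i => 2 * (w i : ℤ) - 1) hk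

lemma last_eq_zero_of_height_nonneg {w : Fin (m + 1) → ℕ} (hw : 2 * ∑ i, w i = m)
    (h : ∀ k ≤ m, 0 ≤ height w k) : w (Fin.last m) = 0 := by
  have hstep := height_succ w (Fin.last m)
  have hsum : (2 : ℤ) * ∑ i, (w i : ℤ) = m := by exact_mod_cast hw
  rw [Fin.val_last, height_of_le w le_rfl, hsum] at hstep
  have := h m le_rfl
  omega

def lukasiewiczInitEquiv (m : ℕ) :
    {w : Fin (m + 1) → ℕ // 2 * ∑ i, w i = m ∧ ∀ k ≤ m, 0 ≤ height w k} ≃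
      {u : Fin m → ℕ // IsLukasiewicz u} where
  toFun w := ⟨Fin.init w.1, by
    have hsum := w.2.1
    rw [Fin.sum_univ_castSucc, last_eq_zero_of_height_nonneg w.2.1 w.2.2, add_zero] at hsum
    exact ⟨hsum, fun k hk => (height_init w.1 hk).symm ▸ w.2.2 k hk⟩⟩
  invFun u := ⟨Fin.snoc u.1 0, by
    refine ⟨by simpa [Fin.sum_univ_castSucc] using u.2.1, fun k hk => ?_⟩
    rw [← height_init _ hk, Fin.init_snoc]
    exact u.2.2 k hk⟩
  left_inv w := Subtype.ext <| by
    change Fin.snoc (Fin.init w.1) 0 = w.1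
    rw [← last_eq_zero_of_height_nonneg w.2.1 w.2.2, Fin.snoc_init_self]
  right_inv u := Subtype.ext <| by simp

def rotateBack (m : ℕ)
    (p : Fin (m + 1) ×
      {w : Fin (m + 1) → ℕ // 2 * ∑ i, w i = m ∧ ∀ k ≤ m, 0 ≤ height w k}) :
    {v : Fin (m + 1) → ℕ // 2 * ∑ i, v i = m} :=
  ⟨fun j => p.2.1 (j - p.1), by
    rw [Fintype.sum_equiv (Equiv.subRight p.1) (fun j => p.2.1 (j - p.1)) p.2.1 fun _ => rfl]
    exact p.2.2.1⟩

lemma rotate_rotateBack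
    (p : Fin (m + 1) ×
      {w : Fin (m + 1) → ℕ // 2 * ∑ i, w i = m ∧ ∀ k ≤ m, 0 ≤ height w k}) :
    (fun j => (rotateBack m p).1 (j + p.1)) = p.2.1 :=
  funext fun j => by simp [rotateBack]

lemma existsUnique_rotate_height_nonneg {v : Fin (m + 1) → ℕ} (hv : 2 * ∑ i, v i = m) :
    ∃! r : Fin (m + 1), ∀ k ≤ m, 0 ≤ height (fun j => v (j + r)) k :=
  existsUnique_rotate_prefixSum_nonneg (fun i => 2 * (v i : ℤ) - 1) <| by
    have : (2 : ℤ) * ∑ i, (v i : ℤ) = m := by exact_mod_cast hv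
    simp [sum_sub_distrib, ← mul_sum, this]

lemma bijective_rotateBack (m : ℕ) : Function.Bijective (rotateBack m) := by
  refine ⟨fun p p' he => ?_, fun v => ?_⟩
  · have hgood (q : Fin (m + 1) × _) :
        ∀ k ≤ m, 0 ≤ height (fun j => (rotateBack m q).1 (j + q.1)) k := by
      rw [rotate_rotateBack]
      exact q.2.2.2
    have hr : p.1 = p'.1 :=
      (existsUnique_rotate_height_nonneg (rotateBack m p).2).unique (hgood p)
        (by rw [he]; exact hgood p')
    have hw : p.2 = p'.2 :=
      Subtype.ext <| by rw [← rotate_rotateBack, ← rotate_rotateBack, he, hr]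
    exact Prod.ext hr hw
  · obtain ⟨r, hr, -⟩ := existsUnique_rotate_height_nonneg v.2
    refine ⟨(r, ⟨fun j => v.1 (j + r), ?_, hr⟩),
      Subtype.ext (funext fun j => by simp [rotateBack])⟩
    rw [Fintype.sum_equiv (Equiv.addRight r) (fun j => v.1 (j + r)) v.1 fun _ => rfl]
    exact v.2

theorem card_sum_eq_mul_card_isLukasiewicz (m : ℕ) :
    Nat.card {v : Fin (m + 1) → ℕ // 2 * ∑ i, v i = m} =
      (m + 1) * Nat.card {u : Fin m → ℕ // IsLukasiewicz u} := by
  rw [← Nat.card_congr (Equiv.ofBijective _ (bijective_rotateBack m)), Nat.card_prod,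
    Nat.card_congr (lukasiewiczInitEquiv m), Nat.card_eq_fintype_card, Fintype.card_fin]

end Counting

theorem natCard_sum_eq_choose (α : Type*) [Fintype α] (l : ℕ) :
    Nat.card {v : α → ℕ // ∑ i, v i = l} = (Fintype.card α + l - 1).choose l := by
  classical
  rw [← Nat.card_congr (Sym.equivNatSumOfFintype α l), Sym.natCard_sym_eq_choose,
    Nat.card_eq_fintype_card]

/-- The number of noncrossing partitions of `{1,…,2l}` with all blocks of even size equals
the Fuss–Catalan number `(1/(2l+1))·binom(3l,l)`. -/
theorem card_nc_even_partitions_eq_fussCatalan (l : ℕ) :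
    (2 * l + 1) * Nat.card {π : Setoid (Fin (2 * l)) //
        IsNoncrossing π ∧ ∀ i, Even (Nat.card {j : Fin (2 * l) // π.r i j})} =
      (3 * l).choose l := by
  have e : {v : Fin (2 * l + 1) → ℕ // 2 * ∑ i, v i = 2 * l} ≃
      {v : Fin (2 * l + 1) → ℕ // ∑ i, v i = l} :=
    Equiv.subtypeEquivRight fun v => by omega
  rw [Nat.card_congr (ncEvenPartitionEquiv _), ← card_sum_eq_mul_card_isLukasiewicz,
    Nat.card_congr e, natCard_sum_eq_choose, Fintype.card_fin]
  congr 1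
  omega
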